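/- arXiv:1705.07226 — 5 statements merged into one kernel-verified Lean document; each statement's English description precedes it below -/
import Mathlib

section
/- Let κ be a ranking function on Ω, A ⊆ Ω an event with κ(A) < ∞ and κ(Aᶜ) < ∞, and x ∈ ℕ∞ a rank. Then the J-conditioning κ_{A→x} is again a ranking function over events: κ_{A→x}(Ω) = 0, and for every event B, κ_{A→x}(B) equals the infimum of κ_{A→x} over the singletons contained in B. -/
/-- Rank of an event. -/
noncomputable def rnk {Ω : Type*} (κ : Ω → ℕ∞) (A : Set Ω) : ℕ∞ := ⨅ w ∈ A, κ w

/-- Conditional rank κ(B | C) = κ(B ∩ C) − κ(C). -/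
noncomputable def crank {Ω : Type*} (κ : Ω → ℕ∞) (B C : Set Ω) : ℕ∞ :=
  rnk κ (B ∩ C) - rnk κ C

/-- J-conditioning of κ by A with strength x. -/
noncomputable def jcond {Ω : Type*} (κ : Ω → ℕ∞) (A : Set Ω) (x : ℕ∞) (B : Set Ω) : ℕ∞ :=
  min (crank κ B A) (crank κ B Aᶜ + x)

namespace ENat

/-- `c ≠ ⊤` is needed for an empty index, where `⊤ - ⊤ = 0`; otherwise the infimum is attained,
`ℕ∞` being well-ordered. -/
lemma iInf_sub {ι : Sort*} (f : ι → ℕ∞) {c : ℕ∞} (hc : c ≠ ⊤) :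
    (⨅ i, f i) - c = ⨅ i, (f i - c) := by
  rcases isEmpty_or_nonempty ι with hι | hι
  · lift c to ℕ using hc
    simp only [iInf_of_empty, top_sub_natCast]
  · obtain ⟨i, hi⟩ := exists_eq_iInf f
    refine le_antisymm (le_iInf fun j => tsub_le_tsub_right (iInf_le f j) c) ?_
    rw [← hi]
    exact iInf_le _ i

lemma iInf₂_sub {ι : Sort*} {κ : ι → Sort*} (f : (i : ι) → κ i → ℕ∞) {c : ℕ∞} (hc : c ≠ ⊤) :
    (⨅ (i) (j), f i j) - c = ⨅ (i) (j), (f i j - c) := by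
  simp only [iInf_sub _ hc]

end ENat

section Ranking

variable {Ω : Type*} (κ : Ω → ℕ∞)

lemma rnk_inter_eq_iInf_singleton (B C : Set Ω) :
    rnk κ (B ∩ C) = ⨅ w ∈ B, rnk κ ({w} ∩ C) := by
  simp only [rnk, Set.mem_inter_iff, Set.mem_singleton_iff, iInf_and, iInf_iInf_eq_left]

lemma crank_eq_iInf_singleton {C : Set Ω} (hC : rnk κ C ≠ ⊤) (B : Set Ω) :
    crank κ B C = ⨅ w ∈ B, crank κ {w} C := by
  rw [crank, rnk_inter_eq_iInf_singleton, ENat.iInf₂_sub _ hC]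
  rfl

lemma jcond_eq_iInf_singleton {A : Set Ω} (hA : rnk κ A ≠ ⊤) (hAc : rnk κ Aᶜ ≠ ⊤) (x : ℕ∞)
    (B : Set Ω) : jcond κ A x B = ⨅ w ∈ B, jcond κ A x {w} := by
  simp only [jcond, crank_eq_iInf_singleton κ hA B, crank_eq_iInf_singleton κ hAc B,
    ENat.iInf₂_add, ← iInf_inf_eq]

lemma jcond_univ (A : Set Ω) (x : ℕ∞) : jcond κ A x Set.univ = 0 := by
  simp [jcond, crank]

end Ranking

theorem jcond_is_ranking_general {Ω : Type*}
    (κ : Ω → ℕ∞) (A : Set Ω)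
    (hA : rnk κ A < ⊤) (hAc : rnk κ Aᶜ < ⊤) (x : ℕ∞) :
    jcond κ A x Set.univ = 0 ∧
    ∀ B : Set Ω, jcond κ A x B = ⨅ w ∈ B, jcond κ A x {w} :=
  ⟨jcond_univ κ A x, jcond_eq_iInf_singleton κ hA.ne hAc.ne x⟩

/-- J-conditioning is again a ranking function over events. -/
theorem jcond_is_ranking {Ω : Type*} [Fintype Ω] [Nonempty Ω]
    (κ : Ω → ℕ∞) (hκ : (⨅ w, κ w) = 0) (A : Set Ω)
    (hA : rnk κ A < ⊤) (hAc : rnk κ Aᶜ < ⊤) (x : ℕ∞) :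
    jcond κ A x Set.univ = 0 ∧
    ∀ B : Set Ω, jcond κ A x B = ⨅ w ∈ B, jcond κ A x {w} :=
  jcond_is_ranking_general κ A hA hAc x
end

section
/- (Semantic content of Theorem 1.) Let κ be a ranking function on Ω, A ⊆ Ω an event with κ(A) < ∞ and κ(Aᶜ) < ∞, and x ∈ ℕ∞ a rank. Define the point function λ : Ω → ℕ∞ by λ(w) = min(κ_A(w), κ_{Aᶜ}(w) + x), where κ_A and κ_{Aᶜ} are the pointwise conditionalizations of κ by A and by Aᶜ. Then λ is already normalized, i.e. ⨅ w, λ(w) = 0, and its extension to events equals the J-conditioning of κ by A with strength x: for every event B, κ_{A→x}(B) = ⨅ w ∈ B, λ(w). -/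
open Classical in
/-- Pointwise conditionalization of κ on an event C. -/
noncomputable def pcond {Ω : Type*} (κ : Ω → ℕ∞) (C : Set Ω) (w : Ω) : ℕ∞ :=
  if w ∈ C then κ w - rnk κ C else ⊤

namespace ENat

theorem iInf_tsub {ι : Sort*} (f : ι → ℕ∞) {c : ℕ∞} (hc : c ≠ ⊤) :
    ⨅ i, (f i - c) = (⨅ i, f i) - c := by
  cases isEmpty_or_nonempty ι with
  | inl _ => rw [iInf_of_empty, iInf_of_empty, ENat.sub_eq_top_iff.mpr ⟨rfl, hc⟩]
  | inr _ =>
    obtain ⟨i, hi⟩ := exists_eq_iInf f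
    refine le_antisymm ?_ (le_iInf fun j => tsub_le_tsub_right (iInf_le f j) c)
    rw [← hi]
    exact iInf_le _ i

theorem biInf_tsub {α : Type*} (s : Set α) (f : α → ℕ∞) {c : ℕ∞} (hc : c ≠ ⊤) :
    ⨅ a ∈ s, (f a - c) = (⨅ a ∈ s, f a) - c := by
  simp_rw [iInf_tsub _ hc]

end ENat

section Rank

variable {Ω : Type*}

theorem rnk_univ (f : Ω → ℕ∞) : rnk f Set.univ = ⨅ w, f w :=
  iInf_univ

theorem rnk_min (f g : Ω → ℕ∞) (B : Set Ω) :
    rnk (fun w => min (f w) (g w)) B = min (rnk f B) (rnk g B) := by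
  simp only [rnk, ← iInf_inf_eq]

theorem rnk_add_const (f : Ω → ℕ∞) (x : ℕ∞) (B : Set Ω) :
    rnk (fun w => f w + x) B = rnk f B + x := by
  simp only [rnk, ENat.iInf_add]

theorem rnk_eq_rnk_inter_of_eq_top {f : Ω → ℕ∞} {C : Set Ω} (hf : ∀ w ∉ C, f w = ⊤)
    (B : Set Ω) : rnk f B = rnk f (B ∩ C) := by
  refine le_antisymm (le_iInf₂ fun w hw => iInf₂_le w hw.1) (le_iInf₂ fun w hw => ?_)
  by_cases hwC : w ∈ C
  · exact iInf₂_le w ⟨hw, hwC⟩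
  · exact (hf w hwC).symm ▸ le_top

theorem rnk_pcond (κ : Ω → ℕ∞) {C : Set Ω} (hC : rnk κ C ≠ ⊤) (B : Set Ω) :
    rnk (pcond κ C) B = crank κ B C :=
  calc rnk (pcond κ C) B = rnk (pcond κ C) (B ∩ C) :=
        rnk_eq_rnk_inter_of_eq_top (fun _ hw => if_neg hw) B
    _ = ⨅ w ∈ B ∩ C, (κ w - rnk κ C) := biInf_congr fun _ hw => if_pos hw.2
    _ = crank κ B C := ENat.biInf_tsub _ _ hC

theorem crank_univ (κ : Ω → ℕ∞) (C : Set Ω) : crank κ Set.univ C = 0 := by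
  simp [crank]

end Rank

theorem jcond_semantics_general {Ω : Type*}
    (κ : Ω → ℕ∞) (A : Set Ω)
    (hA : rnk κ A < ⊤) (hAc : rnk κ Aᶜ < ⊤) (x : ℕ∞) :
    (⨅ w, min (pcond κ A w) (pcond κ Aᶜ w + x)) = 0 ∧
    ∀ B : Set Ω, jcond κ A x B = ⨅ w ∈ B, min (pcond κ A w) (pcond κ Aᶜ w + x) := by
  have hrnk : ∀ B : Set Ω,
      jcond κ A x B = rnk (fun w => min (pcond κ A w) (pcond κ Aᶜ w + x)) B := fun B => by
    rw [rnk_min, rnk_add_const, rnk_pcond κ hA.ne, rnk_pcond κ hAc.ne, jcond]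
  refine ⟨?_, hrnk⟩
  rw [← rnk_univ, ← hrnk, jcond, crank_univ, zero_min]

/-- the pointwise function λ(w) = min(κ_A(w), κ_{Aᶜ}(w) + x) is
normalized and its extension to events equals the J-conditioning of κ by A
with strength x. -/
theorem jcond_semantics {Ω : Type*} [Fintype Ω] [Nonempty Ω]
    (κ : Ω → ℕ∞) (hκ : (⨅ w, κ w) = 0) (A : Set Ω)
    (hA : rnk κ A < ⊤) (hAc : rnk κ Aᶜ < ⊤) (x : ℕ∞) :
    (⨅ w, min (pcond κ A w) (pcond κ Aᶜ w + x)) = 0 ∧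
    ∀ B : Set Ω, jcond κ A x B = ⨅ w ∈ B, min (pcond κ A w) (pcond κ Aᶜ w + x) :=
  jcond_semantics_general κ A hA hAc x
end

section
/- Let κ be a ranking function on Ω, A ⊆ Ω an event with κ(A) < ∞ and κ(Aᶜ) < ∞, and x ∈ ℕ∞ a rank. Then the L-conditioning κ_{A↑x} is again a ranking function over events: κ_{A↑x}(Ω) = 0. -/
/-- L-conditioning of κ by A with strength x. -/
noncomputable def lcond {Ω : Type*} (κ : Ω → ℕ∞) (A : Set Ω) (x : ℕ∞) (B : Set Ω) : ℕ∞ :=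
  min (rnk κ (A ∩ B) - min (rnk κ A) x) (rnk κ (Aᶜ ∩ B) + x - min (rnk κ A) x)

theorem rnk_union {Ω : Type*} (κ : Ω → ℕ∞) (A B : Set Ω) :
    rnk κ (A ∪ B) = min (rnk κ A) (rnk κ B) :=
  iInf_union

theorem min_rnk_rnk_compl {Ω : Type*} (κ : Ω → ℕ∞) (A : Set Ω) :
    min (rnk κ A) (rnk κ Aᶜ) = ⨅ w, κ w := by
  rw [← rnk_union, Set.union_compl_self, rnk, iInf_univ]

theorem min_tsub_min_add_tsub_min_eq_zero {α : Type*} [AddCommMonoid α] [LinearOrder α]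
    [CanonicallyOrderedAdd α] [Sub α] [OrderedSub α] {a b : α} (hab : min a b = 0) (x : α) :
    min (a - min a x) (b + x - min a x) = 0 := by
  rcases le_or_gt a x with hax | hxa
  · simp [min_eq_left hax]
  · have hb : b = 0 := ((min_eq_iff.mp hab).resolve_left fun ⟨ha, _⟩ ↦ by
      simp [ha] at hxa).1
    simp [min_eq_right hxa.le, hb]

theorem lcond_is_ranking_general {Ω : Type*}
    (κ : Ω → ℕ∞) (hκ : (⨅ w, κ w) = 0) (A : Set Ω)
    (x : ℕ∞) :
    lcond κ A x Set.univ = 0 := by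
  rw [lcond, Set.inter_univ, Set.inter_univ]
  exact min_tsub_min_add_tsub_min_eq_zero ((min_rnk_rnk_compl κ A).trans hκ) x

/-- L-conditioning is again a ranking function over events:
it assigns rank 0 to Ω. -/
theorem lcond_is_ranking {Ω : Type*} [Fintype Ω] [Nonempty Ω]
    (κ : Ω → ℕ∞) (hκ : (⨅ w, κ w) = 0) (A : Set Ω)
    (hA : rnk κ A < ⊤) (hAc : rnk κ Aᶜ < ⊤) (x : ℕ∞) :
    lcond κ A x Set.univ = 0 :=
  lcond_is_ranking_general κ hκ A x
end

section
/- L-conditioning is reversible: let κ be a ranking function on Ω, A ⊆ Ω an event with κ(A) < ∞ and κ(Aᶜ) < ∞, and x < ∞ a finite rank. Let κ' be the ranking function on events obtained by L-conditioning κ by A with strength x. Then L-conditioning κ' by Aᶜ with strength x recovers κ: ((κ_{A↑x})_{Aᶜ↑x})(B) = κ(B) for every event B. -/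
/-- L-conditioning, applied to any ranking function over events. -/
noncomputable def lcondE {Ω : Type*} (r : Set Ω → ℕ∞) (A : Set Ω) (x : ℕ∞) (B : Set Ω) : ℕ∞ :=
  min (r (A ∩ B) - min (r A) x) (r (Aᶜ ∩ B) + x - min (r A) x)

/-!
Write `y = min (κ A) x` for the shift of the first conditioning. Since `min (κ A) (κ Aᶜ) = 0`,
either `κ A = 0` and `y = 0`, or `κ Aᶜ = 0`; in both cases the shift of the second conditioning
is `x - y`. The first step lowers `A ∩ B` by `y` and raises `Aᶜ ∩ B` by `x - y`; the second
raises `A ∩ B` by `x - (x - y) = y` and lowers `Aᶜ ∩ B` by `x - y`, which undoes it. No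
truncation is lost because `y ≤ κ A ≤ κ (A ∩ B)` and `y ≤ x < ⊤`.
-/

open Set

namespace ENat

lemma min_add_tsub_min_eq_tsub_min {a b x : ℕ∞} (hab : min a b = 0) :
    min (b + x - min a x) x = x - min a x := by
  rcases min_eq_bot.mp hab with ha | hb
  · simp [show a = 0 from ha]
  · rw [show b = 0 from hb, zero_add, min_eq_left tsub_le_self]

lemma add_tsub_tsub_tsub_cancel {q x y : ℕ∞} (hx : x ≠ ⊤) (hyx : y ≤ x) :
    q + x - y - (x - y) = q := by
  have hy : y ≠ ⊤ := ne_top_of_le_ne_top hx hyx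
  rw [(addLECancellable_of_ne_top hy).add_tsub_assoc_of_le hyx,
    (addLECancellable_of_ne_top (ne_top_of_le_ne_top hx tsub_le_self)).add_tsub_cancel_right]

lemma tsub_add_tsub_tsub_cancel {p x y : ℕ∞} (hx : x ≠ ⊤) (hyx : y ≤ x) (hyp : y ≤ p) :
    p - y + x - (x - y) = p := by
  have hxy : x - y ≠ ⊤ := ne_top_of_le_ne_top hx tsub_le_self
  rw [(addLECancellable_of_ne_top hxy).add_tsub_assoc_of_le tsub_le_self,
    ENat.sub_sub_cancel hx hyx, tsub_add_cancel_of_le hyp]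

end ENat

section EventRanking

variable {Ω : Type*}

structure IsEventRanking (r : Set Ω → ℕ∞) : Prop where
  map_empty : r ∅ = ⊤
  map_union (S T : Set Ω) : r (S ∪ T) = min (r S) (r T)
  map_univ : r univ = 0

lemma isEventRanking_rnk {κ : Ω → ℕ∞} (hκ : (⨅ w, κ w) = 0) : IsEventRanking (rnk κ) where
  map_empty := by simp [rnk]
  map_union S T := iInf_union
  map_univ := by simpa [rnk] using hκ

section lcondE

variable {r : Set Ω → ℕ∞} {x : ℕ∞}

lemma lcondE_inter (hr : r ∅ = ⊤) (hx : x ≠ ⊤) (A B : Set Ω) :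
    lcondE r A x (A ∩ B) = r (A ∩ B) - min (r A) x := by
  have htop : (⊤ : ℕ∞) - min (r A) x = ⊤ :=
    ENat.sub_eq_top_iff.mpr ⟨rfl, ne_top_of_le_ne_top hx (min_le_right _ _)⟩
  rw [lcondE, ← inter_assoc, inter_self, ← inter_assoc, compl_inter_self, empty_inter, hr,
    top_add, htop, min_eq_left le_top]

lemma lcondE_compl_inter (hr : r ∅ = ⊤) (hx : x ≠ ⊤) (A B : Set Ω) :
    lcondE r A x (Aᶜ ∩ B) = r (Aᶜ ∩ B) + x - min (r A) x := by
  have htop : (⊤ : ℕ∞) - min (r A) x = ⊤ :=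
    ENat.sub_eq_top_iff.mpr ⟨rfl, ne_top_of_le_ne_top hx (min_le_right _ _)⟩
  rw [lcondE, ← inter_assoc, inter_compl_self, empty_inter, hr, htop, ← inter_assoc, inter_self,
    min_eq_right le_top]

end lcondE

namespace IsEventRanking

variable {r : Set Ω → ℕ∞}

lemma eq_min_inter_compl_inter (hr : IsEventRanking r) (A B : Set Ω) :
    r B = min (r (A ∩ B)) (r (Aᶜ ∩ B)) := by
  rw [← hr.map_union, ← union_inter_distrib_right, union_compl_self, univ_inter]

lemma anti (hr : IsEventRanking r) {S T : Set Ω} (h : S ⊆ T) : r T ≤ r S := by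
  rw [← union_eq_right.mpr h, hr.map_union]
  exact min_le_left _ _

lemma min_compl_eq_zero (hr : IsEventRanking r) (A : Set Ω) : min (r A) (r Aᶜ) = 0 := by
  rw [← hr.map_union, union_compl_self, hr.map_univ]

lemma min_lcondE_compl (hr : IsEventRanking r) {x : ℕ∞} (hx : x ≠ ⊤) (A : Set Ω) :
    min (lcondE r A x Aᶜ) x = x - min (r A) x := by
  rw [← inter_univ Aᶜ, lcondE_compl_inter hr.map_empty hx, inter_univ]
  exact ENat.min_add_tsub_min_eq_tsub_min (hr.min_compl_eq_zero A)

theorem lcondE_compl_lcondE (hr : IsEventRanking r) {x : ℕ∞} (hx : x ≠ ⊤) (A B : Set Ω) :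
    lcondE (lcondE r A x) Aᶜ x B = r B := by
  have hyx : min (r A) x ≤ x := min_le_right _ _
  have hyp : min (r A) x ≤ r (A ∩ B) := (min_le_left _ _).trans (hr.anti inter_subset_left)
  rw [lcondE, compl_compl, hr.min_lcondE_compl hx, lcondE_compl_inter hr.map_empty hx,
    lcondE_inter hr.map_empty hx, ENat.add_tsub_tsub_tsub_cancel hx hyx,
    ENat.tsub_add_tsub_tsub_cancel hx hyx hyp, min_comm, ← hr.eq_min_inter_compl_inter]

end IsEventRanking

end EventRanking

theorem lcond_reversible_general {Ω : Type*}
    (κ : Ω → ℕ∞) (hκ : (⨅ w, κ w) = 0) (A : Set Ω)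
    (x : ℕ∞) (hx : x < ⊤) :
    ∀ B : Set Ω, lcondE (lcondE (rnk κ) A x) Aᶜ x B = rnk κ B :=
  (isEventRanking_rnk hκ).lcondE_compl_lcondE hx.ne A

/-- L-conditioning is reversible:
((κ_{A↑x})_{Aᶜ↑x})(B) = κ(B) for every event B. -/
theorem lcond_reversible {Ω : Type*} [Fintype Ω] [Nonempty Ω]
    (κ : Ω → ℕ∞) (hκ : (⨅ w, κ w) = 0) (A : Set Ω)
    (hA : rnk κ A < ⊤) (hAc : rnk κ Aᶜ < ⊤) (x : ℕ∞) (hx : x < ⊤) :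
    ∀ B : Set Ω, lcondE (lcondE (rnk κ) A x) Aᶜ x B = rnk κ B :=
  lcond_reversible_general κ hκ A x hx
end

section
/- (Semantic content of Theorem 2, first case.) Let κ be a ranking function on Ω, A ⊆ Ω an event with κ(A) < ∞ and κ(Aᶜ) < ∞, and x ∈ ℕ∞ a rank with κ(A) ≤ x. Then the L-conditioning of κ by A with strength x equals the J-conditioning of κ by A with strength x − κ(A) + κ(Aᶜ): for every event B, κ_{A↑x}(B) = κ_{A→(x − κ(A) + κ(Aᶜ))}(B). -/
/-!
Once `κ(A) ≤ x`, the normalising constant `y = min(κ(A), x)` of L-conditioning is `κ(A)`, so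
the `A`-part of both conditionings is `κ(A ∩ B) − κ(A)`. On the `Aᶜ`-part, since `κ(A)` is
finite the subtraction can be moved onto `x`, and since `κ(Aᶜ) ≤ κ(Aᶜ ∩ B)` the term `κ(Aᶜ)` can
be taken out of `κ(Aᶜ ∩ B)` and put into the strength: this gives
`κ(Aᶜ ∩ B) + x − κ(A) = κ(B | Aᶜ) + (x − κ(A) + κ(Aᶜ))`.
-/

theorem rnk_anti {Ω : Type*} (κ : Ω → ℕ∞) : Antitone (rnk κ) :=
  fun _ _ h => biInf_mono h

theorem ENat.add_tsub_eq_tsub_add_tsub_add {a b c x : ℕ∞} (hc : c ≠ ⊤) (hcx : c ≤ x)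
    (hba : b ≤ a) : a + x - c = a - b + (x - c + b) := by
  calc a + x - c = a + (x - c) := (ENat.addLECancellable_of_ne_top hc).add_tsub_assoc_of_le hcx a
    _ = a - b + b + (x - c) := by rw [tsub_add_cancel_of_le hba]
    _ = a - b + (x - c + b) := by ring

theorem lcond_eq_jcond_of_rank_le_general {Ω : Type*}
    (κ : Ω → ℕ∞) (A : Set Ω)
    (hA : rnk κ A < ⊤) (x : ℕ∞) (hx : rnk κ A ≤ x) :
    ∀ B : Set Ω, lcond κ A x B = jcond κ A (x - rnk κ A + rnk κ Aᶜ) B := by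
  intro B
  unfold lcond jcond crank
  rw [min_eq_left hx, Set.inter_comm B A, Set.inter_comm B Aᶜ,
    ENat.add_tsub_eq_tsub_add_tsub_add hA.ne hx (rnk_anti κ Set.inter_subset_left)]

/-- when κ(A) ≤ x, L-conditioning by A with strength x equals
J-conditioning by A with strength x − κ(A) + κ(Aᶜ). -/
theorem lcond_eq_jcond_of_rank_le {Ω : Type*} [Fintype Ω] [Nonempty Ω]
    (κ : Ω → ℕ∞) (hκ : (⨅ w, κ w) = 0) (A : Set Ω)
    (hA : rnk κ A < ⊤) (hAc : rnk κ Aᶜ < ⊤) (x : ℕ∞) (hx : rnk κ A ≤ x) :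
    ∀ B : Set Ω, lcond κ A x B = jcond κ A (x - rnk κ A + rnk κ Aᶜ) B :=
  lcond_eq_jcond_of_rank_le_general κ A hA x hx
end
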